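/- Fiber-wise Calderón–Zygmund vanishing: let G be a nonnegative dyadic step function on R^2 with ‖G‖_{L^1} = 1; for each x let J_x be the collection of maximal dyadic intervals J with (1/|J|) ∫_J G(x,y) dy > 1, set E := ∪_x ∪_{J ∈ J_x} ({x} × J), and define the good part G̃(x,y) := (1/|J|)∫_J G(x,v) dv for y ∈ J ∈ J_x and G̃(x,y) := G(x,y) for (x,y) ∉ E. Then for every dyadic interval J′ and every (x,y) ∉ E one has (∫_R (G(x,v) − G̃(x,v)) ψ_{J′}(v) dv) ψ_{J′}(y) = 0. Consequently T_d(F, G − G̃)(x,y) = 0 for all (x,y) ∉ E. -/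

import Mathlib

open MeasureTheory Set
open scoped Classical

noncomputable section

/-- The dyadic interval `[2^k l, 2^k (l+1))`. -/
def dIco (k l : ℤ) : Set ℝ := Set.Ico ((2:ℝ)^k * l) ((2:ℝ)^k * (l+1))

/-- The Haar scaling function `φ_I = |I|^{-1/2} 1_I` of the dyadic interval `I = [2^k l, 2^k(l+1))`. -/
def haarPhi (k l : ℤ) (x : ℝ) : ℝ :=
  if x ∈ dIco k l then (Real.sqrt ((2:ℝ)^k))⁻¹ else 0

/-- The Haar wavelet `ψ_I = |I|^{-1/2} (1_{I_left} - 1_{I_right})`. -/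
def haarPsi (k l : ℤ) (x : ℝ) : ℝ :=
  if x ∈ dIco (k-1) (2*l) then (Real.sqrt ((2:ℝ)^k))⁻¹
  else if x ∈ dIco (k-1) (2*l+1) then -(Real.sqrt ((2:ℝ)^k))⁻¹ else 0

/-- The dyadic martingale average `E_k f` at scale `2^{-k}`:
`(E_k f)(x) = (1/|I|) ∫_I f` where `I ∋ x` is the dyadic interval of length `2^{-k}`. -/
def Ek (k : ℤ) (f : ℝ → ℝ) (x : ℝ) : ℝ :=
  (2:ℝ)^k * ∫ t in dIco (-k) ⌊(2:ℝ)^k * x⌋, f t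

/-- `E_k` acting in the first variable of a function on `ℝ²`. -/
def Ek1 (k : ℤ) (F : ℝ × ℝ → ℝ) (p : ℝ × ℝ) : ℝ := Ek k (fun u => F (u, p.2)) p.1

/-- `E_k` acting in the second variable of a function on `ℝ²`. -/
def Ek2 (k : ℤ) (F : ℝ × ℝ → ℝ) (p : ℝ × ℝ) : ℝ := Ek k (fun v => F (p.1, v)) p.2

/-- The martingale difference `Δ_k = E_{k+1} − E_k` in the first variable. -/
def Dk1 (k : ℤ) (F : ℝ × ℝ → ℝ) (p : ℝ × ℝ) : ℝ := Ek1 (k+1) F p - Ek1 k F p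

/-- The martingale difference `Δ_k = E_{k+1} − E_k` in the second variable. -/
def Dk2 (k : ℤ) (F : ℝ × ℝ → ℝ) (p : ℝ × ℝ) : ℝ := Ek2 (k+1) F p - Ek2 k F p

/-- The dyadic twisted paraproduct `T_d(F,G) = Σ_k (E_k^{(1)}F)(Δ_k^{(2)}G)`. -/
def Td (F G : ℝ × ℝ → ℝ) (p : ℝ × ℝ) : ℝ := ∑' k : ℤ, Ek1 k F p * Dk2 k G p

/-- A dyadic step function: a finite linear combination of indicator functions of
dyadic rectangles. -/
def IsDyadicStep (F : ℝ × ℝ → ℝ) : Prop :=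
  ∃ (s : Finset ((ℤ × ℤ) × (ℤ × ℤ))) (c : ((ℤ × ℤ) × (ℤ × ℤ)) → ℝ),
    ∀ p, F p = ∑ r ∈ s, c r * Set.indicator (dIco r.1.1 r.1.2 ×ˢ dIco r.2.1 r.2.2)
      (fun _ => (1:ℝ)) p

/-- The fiberwise average of `G(x, ·)` over the dyadic interval `[2^k l, 2^k(l+1))`
exceeds `1`. -/
def avgGt (G : ℝ × ℝ → ℝ) (x : ℝ) (k l : ℤ) : Prop :=
  1 < ((2:ℝ)^k)⁻¹ * ∫ y in dIco k l, G (x, y)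

/-- `dIco k l` is a *maximal* dyadic interval on which the fiberwise average of `G(x,·)`
exceeds `1`. -/
def maxBad (G : ℝ × ℝ → ℝ) (x : ℝ) (k l : ℤ) : Prop :=
  avgGt G x k l ∧ ∀ k' l' : ℤ, dIco k l ⊆ dIco k' l' → dIco k l ≠ dIco k' l' →
    ¬ avgGt G x k' l'

/-- The exceptional set `E = ∪_x ∪_{J ∈ J_x} ({x} × J)`. -/
def Eset (G : ℝ × ℝ → ℝ) : Set (ℝ × ℝ) :=
  {p : ℝ × ℝ | ∃ k l : ℤ, maxBad G p.1 k l ∧ p.2 ∈ dIco k l}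

/-- The "good part" `G̃` of `G`: on each fiber, replace `G(x,·)` on each maximal bad
interval `J ∈ J_x` by its average `(1/|J|)∫_J G(x,v) dv`. -/
def Gtil (G : ℝ × ℝ → ℝ) (p : ℝ × ℝ) : ℝ :=
  if h : ∃ k l : ℤ, maxBad G p.1 k l ∧ p.2 ∈ dIco k l then
    ((2:ℝ)^(h.choose))⁻¹ * ∫ v in dIco h.choose h.choose_spec.choose, G (p.1, v)
  else G p

/-!
Fix a fiber `x`. Since `G(x,·)` is constant on dyadic intervals of scale at most `2 ^ k₀` (the
finest scale of the rectangles of `G`), an interval of smaller scale has the same average as its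
parent, so maximal bad intervals have scale at least `2 ^ k₀`. Induction on the scale then shows
that `G − G̃` has integral zero on every dyadic interval not strictly contained in a maximal bad
interval: a maximal bad interval carries mean zero by construction, an interval of scale at most
`2 ^ k₀` that is not maximal bad meets no maximal bad interval at all, and a coarser one splits
into two children with the same property. If `(x, y) ∉ E`, every dyadic interval containing `y`,
together with both of its children, has this property, so every Haar coefficient seen at `y` and
every average `E_k (G − G̃)(x, y)` vanishes; hence so do all `Δ_k` and `T_d`.
-/

lemma mem_dIco {k l : ℤ} {v : ℝ} : v ∈ dIco k l ↔ ⌊v / 2 ^ k⌋ = l := by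
  have hp : (0:ℝ) < 2 ^ k := zpow_pos two_pos k
  rw [dIco, Set.mem_Ico, Int.floor_eq_iff, le_div_iff₀ hp, div_lt_iff₀ hp]
  constructor <;> rintro ⟨h1, h2⟩ <;> constructor <;> linarith

lemma left_mem_dIco (k l : ℤ) : (2:ℝ) ^ k * l ∈ dIco k l :=
  mem_dIco.2 (by rw [mul_div_cancel_left₀ _ (zpow_pos two_pos k).ne', Int.floor_intCast])

lemma mem_dIco_floor (k : ℤ) (v : ℝ) : v ∈ dIco k ⌊v / 2 ^ k⌋ := mem_dIco.2 rfl

lemma measurableSet_dIco (k l : ℤ) : MeasurableSet (dIco k l) := measurableSet_Ico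

lemma volume_dIco (k l : ℤ) : volume (dIco k l) = ENNReal.ofReal (2 ^ k) := by
  rw [dIco, Real.volume_Ico]; ring_nf

lemma setIntegral_dIco_const (k l : ℤ) (c : ℝ) : ∫ _ in dIco k l, c = 2 ^ k * c := by
  rw [setIntegral_const, measureReal_def, volume_dIco,
    ENNReal.toReal_ofReal (zpow_pos two_pos k).le, smul_eq_mul]

lemma floor_div_two_zpow_of_le {k k' : ℤ} (hk : k ≤ k') (v : ℝ) :
    ⌊v / 2 ^ k'⌋ = ⌊v / 2 ^ k⌋ / (2 ^ (k' - k).toNat : ℕ) := by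
  rw [← Int.floor_div_natCast, div_div, Nat.cast_pow, Nat.cast_ofNat, ← zpow_natCast,
    ← zpow_add₀ two_ne_zero, Int.toNat_of_nonneg (by omega), add_sub_cancel]

lemma mem_dIco_iff_of_mem {k l k' l' : ℤ} (hk : k ≤ k') {v w : ℝ}
    (hv : v ∈ dIco k l) (hw : w ∈ dIco k l) : v ∈ dIco k' l' ↔ w ∈ dIco k' l' := by
  rw [mem_dIco] at hv hw ⊢
  rw [mem_dIco, floor_div_two_zpow_of_le hk, floor_div_two_zpow_of_le hk, hv, hw]

lemma dIco_subset_of_mem {k l k' l' : ℤ} (hk : k ≤ k') {v : ℝ}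
    (hv : v ∈ dIco k l) (hv' : v ∈ dIco k' l') : dIco k l ⊆ dIco k' l' :=
  fun _ hw => (mem_dIco_iff_of_mem hk hv hw).1 hv'

lemma dIco_subset_or_subset {k l k' l' : ℤ} (h : (dIco k l ∩ dIco k' l').Nonempty) :
    dIco k l ⊆ dIco k' l' ∨ dIco k' l' ⊆ dIco k l := by
  obtain ⟨v, hv, hv'⟩ := h
  rcases le_total k k' with hk | hk
  · exact Or.inl (dIco_subset_of_mem hk hv hv')
  · exact Or.inr (dIco_subset_of_mem hk hv' hv)

lemma le_of_dIco_subset {k l k' l' : ℤ} (h : dIco k l ⊆ dIco k' l') : k ≤ k' := by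
  have hm := measure_mono (μ := volume) h
  rw [volume_dIco, volume_dIco, ENNReal.ofReal_le_ofReal_iff (zpow_pos two_pos k').le] at hm
  exact (zpow_le_zpow_iff_right₀ one_lt_two).1 hm

lemma dIco_eq_dIco_iff {k l k' l' : ℤ} : dIco k l = dIco k' l' ↔ k = k' ∧ l = l' := by
  refine ⟨fun h => ?_, by rintro ⟨rfl, rfl⟩; rfl⟩
  obtain rfl : k = k' := le_antisymm (le_of_dIco_subset h.le) (le_of_dIco_subset h.ge)
  exact ⟨rfl,
    (mem_dIco.1 (left_mem_dIco k l)).symm.trans (mem_dIco.1 (h ▸ left_mem_dIco k l))⟩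

lemma dIco_eq_union (k l : ℤ) : dIco k l = dIco (k - 1) (2 * l) ∪ dIco (k - 1) (2 * l + 1) := by
  ext v
  rw [Set.mem_union, mem_dIco, mem_dIco, mem_dIco,
    floor_div_two_zpow_of_le (sub_one_lt k).le, show (k - (k - 1)).toNat = 1 by omega]
  push_cast
  omega

lemma disjoint_dIco_halves (k l : ℤ) :
    Disjoint (dIco (k - 1) (2 * l)) (dIco (k - 1) (2 * l + 1)) :=
  Set.disjoint_left.2 fun v h0 h1 => by have := (mem_dIco.1 h0).symm.trans (mem_dIco.1 h1); omega

lemma eq_or_subset_of_child_subset {k l m k' l' : ℤ} (hm : dIco (k - 1) m ⊆ dIco k l)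
    (h : dIco (k - 1) m ⊆ dIco k' l') :
    dIco (k - 1) m = dIco k' l' ∨ dIco k l ⊆ dIco k' l' := by
  have hu := left_mem_dIco (k - 1) m
  rcases (le_of_dIco_subset h).eq_or_lt with hk | hk
  · subst hk
    rw [(mem_dIco.1 hu).symm.trans (mem_dIco.1 (h hu))]
    exact Or.inl rfl
  · exact Or.inr (dIco_subset_of_mem (by omega) (hm hu) (h hu))

def MeanZeroOn (f : ℝ → ℝ) (s : Set ℝ) : Prop :=
  IntegrableOn f s ∧ ∫ v in s, f v = 0

lemma meanZeroOn_of_eqOn_zero {f : ℝ → ℝ} {s : Set ℝ} (hs : MeasurableSet s)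
    (hf : EqOn f 0 s) : MeanZeroOn f s :=
  ⟨integrableOn_zero.congr_fun hf.symm hs, by rw [setIntegral_congr_fun hs hf]; simp⟩

lemma MeanZeroOn.of_halves {f : ℝ → ℝ} {k l : ℤ} (h0 : MeanZeroOn f (dIco (k - 1) (2 * l)))
    (h1 : MeanZeroOn f (dIco (k - 1) (2 * l + 1))) : MeanZeroOn f (dIco k l) := by
  rw [dIco_eq_union]
  refine ⟨h0.1.union h1.1, ?_⟩
  rw [setIntegral_union (disjoint_dIco_halves k l) (measurableSet_dIco _ _) h0.1 h1.1,
    h0.2, h1.2, add_zero]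

lemma integral_mul_haarPsi_eq_zero {f : ℝ → ℝ} {k l : ℤ}
    (h0 : MeanZeroOn f (dIco (k - 1) (2 * l))) (h1 : MeanZeroOn f (dIco (k - 1) (2 * l + 1))) :
    ∫ v, f v * haarPsi k l v = 0 := by
  set c := (Real.sqrt ((2:ℝ) ^ k))⁻¹
  have hf : (fun v => f v * haarPsi k l v) = fun v =>
      c * (dIco (k - 1) (2 * l)).indicator f v - c * (dIco (k - 1) (2 * l + 1)).indicator f v := by
    funext v
    by_cases hv0 : v ∈ dIco (k - 1) (2 * l)
    · have hv1 : v ∉ dIco (k - 1) (2 * l + 1) :=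
        Set.disjoint_left.1 (disjoint_dIco_halves k l) hv0
      rw [haarPsi, if_pos hv0, indicator_of_mem hv0, indicator_of_notMem hv1]
      ring
    · by_cases hv1 : v ∈ dIco (k - 1) (2 * l + 1)
      · rw [haarPsi, if_neg hv0, if_pos hv1, indicator_of_notMem hv0, indicator_of_mem hv1]
        ring
      · rw [haarPsi, if_neg hv0, if_neg hv1, indicator_of_notMem hv0, indicator_of_notMem hv1]
        ring
  rw [hf, integral_sub, integral_const_mul, integral_const_mul,
    integral_indicator (measurableSet_dIco _ _), integral_indicator (measurableSet_dIco _ _),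
    h0.2, h1.2, mul_zero, sub_zero]
  · exact (h0.1.integrable_indicator (measurableSet_dIco _ _)).const_mul c
  · exact (h1.1.integrable_indicator (measurableSet_dIco _ _)).const_mul c

lemma haarPsi_eq_zero_of_notMem {k l : ℤ} {v : ℝ} (hv : v ∉ dIco k l) :
    haarPsi k l v = 0 := by
  rw [dIco_eq_union, Set.mem_union, not_or] at hv
  simp [haarPsi, hv.1, hv.2]

lemma IsDyadicStep.integrable_fiber {G : ℝ × ℝ → ℝ} (hG : IsDyadicStep G) (x : ℝ) :
    Integrable fun v => G (x, v) := by
  obtain ⟨s, c, hG⟩ := hG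
  simp_rw [hG]
  refine integrable_finsetSum _ fun r _ => ?_
  simp_rw [← Pi.one_def, Set.indicator_prod_one, ← mul_assoc]
  refine Integrable.const_mul ?_ _
  exact (integrable_indicator_iff (measurableSet_dIco _ _)).2
    (integrableOn_const (by rw [volume_dIco]; exact ENNReal.ofReal_ne_top))

lemma IsDyadicStep.exists_eqOn_dIco {G : ℝ × ℝ → ℝ} (hG : IsDyadicStep G) :
    ∃ k₀ : ℤ, ∀ x : ℝ, ∀ k l : ℤ, k ≤ k₀ →
      ∀ v ∈ dIco k l, G (x, v) = G (x, 2 ^ k * l) := by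
  obtain ⟨s, c, hG⟩ := hG
  obtain ⟨M, hM⟩ := (s.image fun r => -r.2.1).exists_le
  refine ⟨-M, fun x k l hk v hv => ?_⟩
  rw [hG, hG]
  refine Finset.sum_congr rfl fun r hr => ?_
  have hkr : k ≤ r.2.1 := hk.trans (neg_le.1 (hM _ (Finset.mem_image_of_mem _ hr)))
  simp only [Set.indicator_apply, Set.mem_prod,
    mem_dIco_iff_of_mem hkr hv (left_mem_dIco k l)]

def badFiber (G : ℝ × ℝ → ℝ) (x v : ℝ) : ℝ := G (x, v) - Gtil G (x, v)

section CalderonZygmund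

variable {G : ℝ × ℝ → ℝ} {x : ℝ} {k l k' l' : ℤ}

lemma maxBad_unique (hb : maxBad G x k l) (hb' : maxBad G x k' l') {v : ℝ}
    (hv : v ∈ dIco k l) (hv' : v ∈ dIco k' l') : k = k' ∧ l = l' := by
  by_contra hne
  rcases dIco_subset_or_subset ⟨v, hv, hv'⟩ with hs | hs
  · exact hb.2 k' l' hs (fun h => hne (dIco_eq_dIco_iff.1 h)) hb'.1
  · refine hb'.2 k l hs (fun h => hne ?_) hb.1
    obtain ⟨rfl, rfl⟩ := dIco_eq_dIco_iff.1 h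
    exact ⟨rfl, rfl⟩

lemma Gtil_eq_of_maxBad (hb : maxBad G x k l) {v : ℝ} (hv : v ∈ dIco k l) :
    Gtil G (x, v) = ((2:ℝ) ^ k)⁻¹ * ∫ u in dIco k l, G (x, u) := by
  have hex : ∃ k l : ℤ, maxBad G x k l ∧ v ∈ dIco k l := ⟨k, l, hb, hv⟩
  rw [Gtil, dif_pos hex]
  obtain ⟨hb', hv'⟩ := hex.choose_spec.choose_spec
  -- the chosen indices cannot be substituted directly, so generalize over them
  suffices ∀ k' l', maxBad G x k' l' → v ∈ dIco k' l' →
      ((2:ℝ) ^ k')⁻¹ * ∫ u in dIco k' l', G (x, u) =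
        ((2:ℝ) ^ k)⁻¹ * ∫ u in dIco k l, G (x, u) from
    this _ _ hb' hv'
  rintro k' l' hb' hv'
  obtain ⟨rfl, rfl⟩ := maxBad_unique hb' hb hv' hv
  rfl

lemma meanZeroOn_badFiber_of_maxBad (hint : Integrable fun v => G (x, v))
    (hb : maxBad G x k l) : MeanZeroOn (badFiber G x) (dIco k l) := by
  set A := ((2:ℝ) ^ k)⁻¹ * ∫ u in dIco k l, G (x, u)
  have heq : EqOn (fun v => G (x, v) - A) (badFiber G x) (dIco k l) := fun v hv => by
    rw [badFiber, Gtil_eq_of_maxBad hb hv]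
  have hA : IntegrableOn (fun _ => A) (dIco k l) :=
    integrableOn_const (by rw [volume_dIco]; exact ENNReal.ofReal_ne_top)
  refine ⟨(hint.integrableOn.sub hA).congr_fun heq (measurableSet_dIco k l), ?_⟩
  rw [← setIntegral_congr_fun (measurableSet_dIco k l) heq, integral_sub hint.integrableOn hA,
    setIntegral_dIco_const, mul_inv_cancel_left₀ (zpow_pos two_pos k).ne', sub_self]

lemma avgGt_iff_of_eqOn {c : ℝ} (h : EqOn (fun v => G (x, v)) (fun _ => c) (dIco k l)) :
    avgGt G x k l ↔ 1 < c := by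
  rw [avgGt, setIntegral_congr_fun (measurableSet_dIco k l) h, setIntegral_dIco_const,
    inv_mul_cancel_left₀ (zpow_pos two_pos k).ne']

lemma le_of_maxBad {k₀ : ℤ}
    (hconst : ∀ k l : ℤ, k ≤ k₀ → ∀ v ∈ dIco k l, G (x, v) = G (x, 2 ^ k * l))
    (hb : maxBad G x k l) : k₀ ≤ k := by
  by_contra! hk
  set m := ⌊(2:ℝ) ^ k * l / 2 ^ (k + 1)⌋
  have hsub : dIco k l ⊆ dIco (k + 1) m :=
    dIco_subset_of_mem (by omega) (left_mem_dIco k l) (mem_dIco_floor _ _)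
  have hc : EqOn (fun v => G (x, v)) (fun _ => G (x, 2 ^ (k + 1) * m)) (dIco (k + 1) m) :=
    fun v hv => hconst _ _ (by omega) v hv
  have hne : dIco k l ≠ dIco (k + 1) m := fun h => by have := (dIco_eq_dIco_iff.1 h).1; omega
  exact hb.2 _ _ hsub hne ((avgGt_iff_of_eqOn hc).2 ((avgGt_iff_of_eqOn (hc.mono hsub)).1 hb.1))

lemma IsDyadicStep.exists_le_of_maxBad (hG : IsDyadicStep G) :
    ∃ k₀ : ℤ, ∀ x : ℝ, ∀ k l : ℤ, maxBad G x k l → k₀ ≤ k :=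
  let ⟨k₀, hconst⟩ := hG.exists_eqOn_dIco
  ⟨k₀, fun x _ _ => le_of_maxBad (hconst x)⟩

lemma badFiber_eqOn_zero {k₀ : ℤ} (hscale : ∀ k l : ℤ, maxBad G x k l → k₀ ≤ k)
    (hk : k ≤ k₀)
    (hno : ∀ k' l', maxBad G x k' l' → ¬ dIco k l ⊆ dIco k' l') :
    EqOn (badFiber G x) 0 (dIco k l) := by
  intro v hv
  rw [Pi.zero_apply, badFiber, Gtil, dif_neg, sub_self]
  rintro ⟨k', l', hb, hv'⟩
  exact hno _ _ hb (dIco_subset_of_mem (hk.trans (hscale _ _ hb)) hv hv')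

lemma not_subset_maxBad_of_not_maxBad
    (htop : ∀ k' l', maxBad G x k' l' → dIco k l ⊆ dIco k' l' → dIco k l = dIco k' l')
    (hb : ¬ maxBad G x k l) : ∀ k' l', maxBad G x k' l' → ¬ dIco k l ⊆ dIco k' l' :=
  fun k' l' hb' hs => by
    obtain ⟨rfl, rfl⟩ := dIco_eq_dIco_iff.1 (htop _ _ hb' hs)
    exact hb hb'

lemma meanZeroOn_badFiber {k₀ : ℤ} (hint : Integrable fun v => G (x, v))
    (hscale : ∀ k l : ℤ, maxBad G x k l → k₀ ≤ k) (k l : ℤ)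
    (htop : ∀ k' l', maxBad G x k' l' → dIco k l ⊆ dIco k' l' → dIco k l = dIco k' l') :
    MeanZeroOn (badFiber G x) (dIco k l) := by
  obtain ⟨n, hn⟩ : ∃ n : ℕ, k ≤ k₀ + n := ⟨(k - k₀).toNat, by omega⟩
  induction n generalizing k l with
  | zero =>
    by_cases hb : maxBad G x k l
    · exact meanZeroOn_badFiber_of_maxBad hint hb
    exact meanZeroOn_of_eqOn_zero (measurableSet_dIco k l)
      (badFiber_eqOn_zero hscale (by omega) (not_subset_maxBad_of_not_maxBad htop hb))
  | succ n ih =>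
    by_cases hb : maxBad G x k l
    · exact meanZeroOn_badFiber_of_maxBad hint hb
    have hchild : ∀ m, dIco (k - 1) m ⊆ dIco k l →
        MeanZeroOn (badFiber G x) (dIco (k - 1) m) := fun m hm =>
      ih (k - 1) m (fun k' l' hb' hs => (eq_or_subset_of_child_subset hm hs).resolve_right
        (not_subset_maxBad_of_not_maxBad htop hb k' l' hb')) (by omega)
    rw [dIco_eq_union k l] at hchild
    exact (hchild _ subset_union_left).of_halves (hchild _ subset_union_right)

lemma meanZeroOn_badFiber_of_notMem_Eset {k₀ : ℤ} (hint : Integrable fun v => G (x, v))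
    (hscale : ∀ k l : ℤ, maxBad G x k l → k₀ ≤ k) {y : ℝ} (hp : (x, y) ∉ Eset G)
    (hy : y ∈ dIco k l) : MeanZeroOn (badFiber G x) (dIco k l) :=
  meanZeroOn_badFiber hint hscale k l fun k' l' hb hs => absurd ⟨k', l', hb, hs hy⟩ hp

lemma meanZeroOn_badFiber_child_of_notMem_Eset {k₀ : ℤ} (hint : Integrable fun v => G (x, v))
    (hscale : ∀ k l : ℤ, maxBad G x k l → k₀ ≤ k) {y : ℝ} (hp : (x, y) ∉ Eset G)
    (hy : y ∈ dIco k l) {m : ℤ} (hm : dIco (k - 1) m ⊆ dIco k l) :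
    MeanZeroOn (badFiber G x) (dIco (k - 1) m) :=
  meanZeroOn_badFiber hint hscale _ _ fun k' l' hb hs =>
    (eq_or_subset_of_child_subset hm hs).resolve_right fun hI => hp ⟨k', l', hb, hI hy⟩

end CalderonZygmund

theorem cz_vanishing_general (G : ℝ × ℝ → ℝ) (hstep : IsDyadicStep G) :
    (∀ k' l' : ℤ, ∀ p : ℝ × ℝ, p ∉ Eset G →
      (∫ v : ℝ, (G (p.1, v) - Gtil G (p.1, v)) * haarPsi k' l' v) * haarPsi k' l' p.2 = 0) ∧
    (∀ F : ℝ × ℝ → ℝ, ∀ p : ℝ × ℝ, p ∉ Eset G →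
      Td F (fun r => G r - Gtil G r) p = 0) := by
  obtain ⟨k₀, hscale⟩ := hstep.exists_le_of_maxBad
  refine ⟨fun k l p hp => ?_, fun F p hp => ?_⟩
  · by_cases hy : p.2 ∈ dIco k l
    · have hchild := fun m => meanZeroOn_badFiber_child_of_notMem_Eset
        (hstep.integrable_fiber p.1) (hscale p.1) hp hy (m := m)
      rw [dIco_eq_union k l] at hchild
      exact mul_eq_zero_of_left (integral_mul_haarPsi_eq_zero
        (hchild _ subset_union_left) (hchild _ subset_union_right)) _
    · rw [haarPsi_eq_zero_of_notMem hy, mul_zero]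
  · have hEk : ∀ m, Ek2 m (fun r => G r - Gtil G r) p = 0 := fun m => by
      have hy : p.2 ∈ dIco (-m) ⌊2 ^ m * p.2⌋ := by
        rw [mem_dIco, zpow_neg, div_inv_eq_mul, mul_comm]
      exact mul_eq_zero_of_right _ (meanZeroOn_badFiber_of_notMem_Eset
        (hstep.integrable_fiber p.1) (hscale p.1) hp hy).2
    simp only [Td, Dk2, hEk, sub_self, mul_zero, tsum_zero]

/-- **Fiber-wise Calderón–Zygmund vanishing:** for a nonnegative dyadic step function `G` with
`‖G‖_{L¹} = 1`, the bad part `G − G̃` has vanishing fiberwise Haar coefficients off the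
exceptional set: `(∫ (G(x,v) − G̃(x,v)) ψ_{J'}(v) dv) ψ_{J'}(y) = 0` for `(x,y) ∉ E`;
consequently `T_d(F, G − G̃) = 0` off `E` for every `F`. -/
theorem cz_vanishing (G : ℝ × ℝ → ℝ) (hstep : IsDyadicStep G)
    (h0 : ∀ p, 0 ≤ G p) (hL1 : (∫ p : ℝ × ℝ, G p) = 1) :
    (∀ k' l' : ℤ, ∀ p : ℝ × ℝ, p ∉ Eset G →
      (∫ v : ℝ, (G (p.1, v) - Gtil G (p.1, v)) * haarPsi k' l' v) * haarPsi k' l' p.2 = 0) ∧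
    (∀ F : ℝ × ℝ → ℝ, ∀ p : ℝ × ℝ, p ∉ Eset G →
      Td F (fun r => G r - Gtil G r) p = 0) :=
  cz_vanishing_general G hstep
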